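/- arXiv:1201.2934 — 2 statements merged into one kernel-verified Lean document; each statement's English description precedes it below -/
import Mathlib

section
/- Let X be a random variable taking values in a finite set, let E be a finite index set, and for each s ∈ E let Z_s be a random variable taking values in a finite set, all on a common probability space. Assume the family (Z_s)_{s ∈ E} is conditionally independent given X. For a finite set A ⊆ E write Z_A for the tuple (Z_s)_{s ∈ A}. Then the set function A ↦ I(X; Z_A) is submodular: for all A ⊆ B ⊆ E and all s ∉ B, I(X; Z_{A ∪ {s}}) − I(X; Z_A) ≥ I(X; Z_{B ∪ {s}}) − I(X; Z_B). -/
open MeasureTheory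

/-- Shannon entropy `H(X) = ∑ₓ −P(X=x) log P(X=x)` of a random variable `X`
taking values in a finite set. -/
noncomputable def Hent {Ω : Type*} [MeasurableSpace Ω] (Pr : Measure Ω)
    {S : Type*} [Fintype S] (X : Ω → S) : ℝ :=
  ∑ x : S, Real.negMulLog (Pr {ω | X ω = x}).toReal

/-- Conditional entropy `H(X|Y) = H(X,Y) − H(Y)`. -/
noncomputable def condHent {Ω : Type*} [MeasurableSpace Ω] (Pr : Measure Ω)
    {S T : Type*} [Fintype S] [Fintype T] (X : Ω → S) (Y : Ω → T) : ℝ :=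
  Hent Pr (fun ω => (X ω, Y ω)) - Hent Pr Y

/-- Mutual information `I(X;Y) = H(X) + H(Y) − H(X,Y)`. -/
noncomputable def mutualInfo {Ω : Type*} [MeasurableSpace Ω] (Pr : Measure Ω)
    {S T : Type*} [Fintype S] [Fintype T] (X : Ω → S) (Y : Ω → T) : ℝ :=
  Hent Pr X + Hent Pr Y - Hent Pr (fun ω => (X ω, Y ω))

/-- Conditional mutual information `I(X;Z|Y) = H(X|Y) + H(Z|Y) − H(X,Z|Y)`. -/
noncomputable def condMutualInfo {Ω : Type*} [MeasurableSpace Ω] (Pr : Measure Ω)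
    {S T U : Type*} [Fintype S] [Fintype T] [Fintype U]
    (X : Ω → S) (Z : Ω → U) (Y : Ω → T) : ℝ :=
  condHent Pr X Y + condHent Pr Z Y - condHent Pr (fun ω => (X ω, Z ω)) Y

/-- The joint random variable `Z_A = (Z_s)_{s ∈ A}` for a finite index set `A`. -/
def tupleRV {Ω : Type*} {E : Type*} {V : E → Type*} (Z : (s : E) → Ω → V s)
    (A : Finset E) : Ω → ((s : A) → V s) :=
  fun ω s => Z s ω

/-- The family `(Z s)_{s ∈ E}` is conditionally independent given `X` if, whenever
`P(X=x) > 0`, the conditional joint distribution of `(Z s)_s` given `X = x` is the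
product of the conditional marginal distributions. -/
def FamilyCondIndepGiven {Ω : Type*} [MeasurableSpace Ω] (Pr : Measure Ω)
    {S : Type*} {E : Type*} [Fintype E] {V : E → Type*}
    (X : Ω → S) (Z : (s : E) → Ω → V s) : Prop :=
  ∀ x : S, Pr {ω | X ω = x} ≠ 0 → ∀ z : (s : E) → V s,
    (Pr {ω | (∀ s, Z s ω = z s) ∧ X ω = x}).toReal / (Pr {ω | X ω = x}).toReal
      = ∏ s : E, ((Pr {ω | Z s ω = z s ∧ X ω = x}).toReal / (Pr {ω | X ω = x}).toReal)


open MeasureTheory Finset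
set_option linter.unusedSectionVars false

section Aux
variable {Ω : Type*} [MeasurableSpace Ω] (Pr : Measure Ω) [IsProbabilityMeasure Pr]

lemma pr_mono {A B : Set Ω} (h : A ⊆ B) : (Pr A).toReal ≤ (Pr B).toReal :=
  ENNReal.toReal_mono (measure_ne_top _ _) (measure_mono h)

lemma pr_zero_of_subset {A B : Set Ω} (h : A ⊆ B) (hB : (Pr B).toReal = 0) :
    (Pr A).toReal = 0 :=
  le_antisymm (hB ▸ pr_mono Pr h) ENNReal.toReal_nonneg

/-- Partition lemma. -/
lemma sum_pr_inter {T : Type*} [Fintype T] {Q : Set Ω} (hQ : MeasurableSet Q)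
    (G : Ω → T) (hG : ∀ t, MeasurableSet {ω | G ω = t}) :
    ∑ t, (Pr (Q ∩ {ω | G ω = t})).toReal = (Pr Q).toReal := by
  rw [← ENNReal.toReal_sum (fun a _ => measure_ne_top _ _)]
  congr 1
  have hU : (⋃ t, Q ∩ {ω | G ω = t}) = Q := by
    ext ω
    simp only [Set.mem_iUnion, Set.mem_inter_iff, Set.mem_setOf_eq]
    exact ⟨fun ⟨t, ht, _⟩ => ht, fun h => ⟨G ω, h, rfl⟩⟩
  have hd : Pairwise (Function.onFun Disjoint (fun t => Q ∩ {ω | G ω = t})) := by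
    intro i j hij
    refine Set.disjoint_left.mpr fun ω hi hj => hij ?_
    rw [← hi.2, ← hj.2]
  have hm := measure_iUnion (μ := Pr) hd (fun t => hQ.inter (hG t))
  rw [hU] at hm
  rw [hm, tsum_fintype]

/-- Entropy is invariant under injective relabeling. -/
lemma hent_comp_inj {T U : Type*} [Fintype T] [Fintype U] (F : Ω → T) (φ : T → U)
    (hφ : Function.Injective φ) :
    Hent Pr (fun ω => φ (F ω)) = Hent Pr F := by
  classical
  unfold Hent
  rw [← Finset.sum_subset (Finset.subset_univ (univ.image φ)) ?h0]
  · rw [Finset.sum_image (fun a _ b _ h => hφ h)]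
    refine Finset.sum_congr rfl fun t _ => ?_
    have : {ω | φ (F ω) = φ t} = {ω | F ω = t} := by
      ext ω
      simp [hφ.eq_iff]
    rw [this]
  · intro u _ hu
    have : {ω | φ (F ω) = u} = ∅ := by
      ext ω
      simp only [Set.mem_setOf_eq, Set.mem_empty_iff_false, iff_false]
      intro h
      exact hu (Finset.mem_image.mpr ⟨F ω, Finset.mem_univ _, h⟩)
    simp [this]

/-- Algebraic decomposition of the entropy of a product. -/
lemma prodEntropy {T U : Type*} [Fintype T] [Fintype U]
    (r : T → U → ℝ) (a : T → ℝ) (b : T → U → ℝ)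
    (hab : ∀ t u, r t u = a t * b t u)
    (hb : ∀ t, a t ≠ 0 → ∑ u, b t u = 1) :
    ∑ t, ∑ u, Real.negMulLog (r t u)
      = ∑ t, Real.negMulLog (a t) + ∑ t, a t * ∑ u, Real.negMulLog (b t u) := by
  rw [← Finset.sum_add_distrib]
  refine Finset.sum_congr rfl fun t _ => ?_
  by_cases h : a t = 0
  · simp [hab, h]
  · have h1 : ∑ u, Real.negMulLog (r t u)
        = ∑ u, (b t u * Real.negMulLog (a t) + a t * Real.negMulLog (b t u)) := by
      refine Finset.sum_congr rfl fun u _ => ?_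
      rw [hab, Real.negMulLog_mul]
    rw [h1, Finset.sum_add_distrib, ← Finset.sum_mul, hb t h, one_mul, ← Finset.mul_sum]

end Aux

section CondEnt
variable {Ω : Type*} [MeasurableSpace Ω] (Pr : Measure Ω) [IsProbabilityMeasure Pr]

/-- Conditional probability `P(G=u | F=t)`, with junk value `0` when `P(F=t)=0`. -/
noncomputable def condp {T U : Type*} (F : Ω → T) (G : Ω → U) (t : T) (u : U) : ℝ :=
  if (Pr {ω | F ω = t}).toReal = 0 then 0
  else (Pr ({ω | F ω = t} ∩ {ω | G ω = u})).toReal / (Pr {ω | F ω = t}).toReal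

/-- Conditional entropy `H(G|F)` written via conditional probabilities. -/
noncomputable def condEnt {T U : Type*} [Fintype T] [Fintype U] (F : Ω → T) (G : Ω → U) : ℝ :=
  ∑ t, (Pr {ω | F ω = t}).toReal * ∑ u, Real.negMulLog (condp Pr F G t u)

lemma condEnt_swap {T U : Type*} [Fintype T] [Fintype U] (F : Ω → T) (G : Ω → U) :
    condEnt Pr F G = ∑ u, ∑ t, (Pr {ω | F ω = t}).toReal
      * Real.negMulLog (condp Pr F G t u) := by
  unfold condEnt
  rw [Finset.sum_comm]
  exact Finset.sum_congr rfl fun t _ => Finset.mul_sum _ _ _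

lemma condp_nonneg {T U : Type*} (F : Ω → T) (G : Ω → U) (t : T) (u : U) :
    0 ≤ condp Pr F G t u := by
  unfold condp
  split
  · exact le_refl _
  · positivity

lemma mul_condp {T U : Type*} (F : Ω → T) (G : Ω → U) (t : T) (u : U) :
    (Pr {ω | F ω = t}).toReal * condp Pr F G t u
      = (Pr ({ω | F ω = t} ∩ {ω | G ω = u})).toReal := by
  unfold condp
  split
  · next h =>
      rw [mul_zero, eq_comm]
      exact pr_zero_of_subset Pr Set.inter_subset_left h
  · next h => exact mul_div_cancel₀ _ h

lemma condp_of_ne {T U : Type*} (F : Ω → T) (G : Ω → U) (t : T) (u : U)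
    (h : (Pr {ω | F ω = t}).toReal ≠ 0) :
    condp Pr F G t u
      = (Pr ({ω | F ω = t} ∩ {ω | G ω = u})).toReal / (Pr {ω | F ω = t}).toReal := by
  unfold condp
  rw [if_neg h]

lemma sum_condp {T U : Type*} [Fintype U] (F : Ω → T) (G : Ω → U)
    (hF : ∀ t, MeasurableSet {ω | F ω = t}) (hG : ∀ u, MeasurableSet {ω | G ω = u})
    (t : T) (h : (Pr {ω | F ω = t}).toReal ≠ 0) :
    ∑ u, condp Pr F G t u = 1 := by
  have h1 : ∑ u, condp Pr F G t u
      = (∑ u, (Pr ({ω | F ω = t} ∩ {ω | G ω = u})).toReal) / (Pr {ω | F ω = t}).toReal := by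
    rw [Finset.sum_div]
    exact Finset.sum_congr rfl fun u _ => condp_of_ne Pr F G t u h
  rw [h1, sum_pr_inter Pr (hF t) G hG, div_self h]

/-- Chain rule: `H(F,G) = H(F) + H(G|F)`. -/
lemma hent_pair {T U : Type*} [Fintype T] [Fintype U] (F : Ω → T) (G : Ω → U)
    (hF : ∀ t, MeasurableSet {ω | F ω = t}) (hG : ∀ u, MeasurableSet {ω | G ω = u}) :
    Hent Pr (fun ω => (F ω, G ω)) = Hent Pr F + condEnt Pr F G := by
  unfold Hent condEnt
  rw [Fintype.sum_prod_type]
  calc ∑ t, ∑ u, Real.negMulLog (Pr {ω | (F ω, G ω) = (t, u)}).toReal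
      = ∑ t, ∑ u, Real.negMulLog (Pr ({ω | F ω = t} ∩ {ω | G ω = u})).toReal := by
        refine Finset.sum_congr rfl fun t _ => Finset.sum_congr rfl fun u _ => ?_
        have : {ω | (F ω, G ω) = (t, u)} = {ω | F ω = t} ∩ {ω | G ω = u} := by
          ext ω
          simp [Prod.ext_iff]
        rw [this]
    _ = _ := by
        refine prodEntropy _ _ _ (fun t u => ?_) (fun t h => sum_condp Pr F G hF hG t h)
        rw [← mul_condp]

/-- Conditioning on more reduces entropy: if `F = π ∘ G` then `H(Z|π∘G) ≥ H(Z|G)`. -/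
lemma condEnt_comp_ge {T U W : Type*} [Fintype T] [Fintype U] [Fintype W]
    (G : Ω → U) (π : U → T) (Zs : Ω → W)
    (hG : ∀ u, MeasurableSet {ω | G ω = u}) (hZ : ∀ v, MeasurableSet {ω | Zs ω = v}) :
    condEnt Pr G Zs ≤ condEnt Pr (fun ω => π (G ω)) Zs := by
  classical
  have hF : ∀ t : T, MeasurableSet {ω | π (G ω) = t} := by
    intro t
    have : {ω | π (G ω) = t} = ⋃ u ∈ Finset.univ.filter (fun u => π u = t), {ω | G ω = u} := by
      ext ω
      simp only [Set.mem_setOf_eq, Set.mem_iUnion, Finset.mem_filter, Finset.mem_univ, true_and]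
      exact ⟨fun h => ⟨G ω, h, rfl⟩, fun ⟨u, hu, h2⟩ => by rw [h2]; exact hu⟩
    rw [this]
    exact (Finset.univ.filter (fun u => π u = t)).measurableSet_biUnion (fun u _ => hG u)
  have fiber_sum : ∀ (t : T) (Q : Set Ω), MeasurableSet Q →
      ∑ u ∈ Finset.univ.filter (fun u => π u = t), (Pr ({ω | G ω = u} ∩ Q)).toReal
        = (Pr ({ω | π (G ω) = t} ∩ Q)).toReal := by
    intro t Q hQ
    rw [← sum_pr_inter Pr ((hF t).inter hQ) G hG, Finset.sum_filter]
    refine Finset.sum_congr rfl fun u _ => ?_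
    by_cases h : π u = t
    · rw [if_pos h]
      have hset : ({ω | π (G ω) = t} ∩ Q) ∩ {ω | G ω = u} = {ω | G ω = u} ∩ Q := by
        ext ω
        simp only [Set.mem_inter_iff, Set.mem_setOf_eq]
        constructor
        · rintro ⟨⟨_, h2⟩, h3⟩
          exact ⟨h3, h2⟩
        · rintro ⟨h1, h2⟩
          exact ⟨⟨by rw [h1]; exact h, h2⟩, h1⟩
      rw [hset]
    · rw [if_neg h]
      have : ({ω | π (G ω) = t} ∩ Q) ∩ {ω | G ω = u} = ∅ := by
        ext ω
        simp only [Set.mem_inter_iff, Set.mem_setOf_eq, Set.mem_empty_iff_false, iff_false]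
        rintro ⟨⟨h1, _⟩, h2⟩
        exact h (by rw [← h2]; exact h1)
      simp [this]
  rw [condEnt_swap, condEnt_swap]
  refine Finset.sum_le_sum fun v _ => ?_
  rw [← Finset.sum_fiberwise (Finset.univ) π
    (fun u => (Pr {ω | G ω = u}).toReal * Real.negMulLog (condp Pr G Zs u v))]
  refine Finset.sum_le_sum fun t _ => ?_
  by_cases hpt : (Pr {ω | π (G ω) = t}).toReal = 0
  · have hz : ∀ u ∈ Finset.univ.filter (fun u => π u = t), (Pr {ω | G ω = u}).toReal = 0 := by
      intro u hu
      refine pr_zero_of_subset Pr ?_ hpt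
      intro ω hω
      simp only [Set.mem_setOf_eq] at hω ⊢
      rw [hω]
      exact (Finset.mem_filter.mp hu).2
    rw [hpt, zero_mul]
    refine le_of_eq (Finset.sum_eq_zero fun u hu => ?_)
    rw [hz u hu, zero_mul]
  · have h₀ : ∀ u ∈ Finset.univ.filter (fun u => π u = t),
        0 ≤ (Pr {ω | G ω = u}).toReal / (Pr {ω | π (G ω) = t}).toReal := by
      intro u _
      positivity
    have h₁ : ∑ u ∈ Finset.univ.filter (fun u => π u = t),
        (Pr {ω | G ω = u}).toReal / (Pr {ω | π (G ω) = t}).toReal = 1 := by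
      rw [← Finset.sum_div]
      have := fiber_sum t Set.univ MeasurableSet.univ
      simp only [Set.inter_univ] at this
      rw [this, div_self hpt]
    have hmem : ∀ u ∈ Finset.univ.filter (fun u => π u = t),
        condp Pr G Zs u v ∈ Set.Ici (0:ℝ) := fun u _ => condp_nonneg Pr G Zs u v
    have key := Real.concaveOn_negMulLog.le_map_sum h₀ h₁ hmem
    simp only [smul_eq_mul] at key
    have hsum : ∑ u ∈ Finset.univ.filter (fun u => π u = t),
        (Pr {ω | G ω = u}).toReal / (Pr {ω | π (G ω) = t}).toReal * condp Pr G Zs u v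
        = condp Pr (fun ω => π (G ω)) Zs t v := by
      rw [condp_of_ne Pr _ Zs t v hpt, ← fiber_sum t _ (hZ v), Finset.sum_div]
      refine Finset.sum_congr rfl fun u _ => ?_
      rw [div_mul_eq_mul_div, mul_condp Pr G Zs u v]
    rw [hsum] at key
    have := mul_le_mul_of_nonneg_left key
      (ENNReal.toReal_nonneg : (0:ℝ) ≤ (Pr {ω | π (G ω) = t}).toReal)
    rw [Finset.mul_sum] at this
    refine le_trans (le_of_eq ?_) this
    refine Finset.sum_congr rfl fun u _ => ?_
    field_simp

end CondEnt

section Indep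
variable {Ω : Type*} [MeasurableSpace Ω] (Pr : Measure Ω) [IsProbabilityMeasure Pr]

lemma mEv {T : Type*} [MeasurableSpace T] [MeasurableSingletonClass T] {F : Ω → T}
    (hF : Measurable F) (t : T) : MeasurableSet {ω | F ω = t} :=
  hF (measurableSet_singleton t)

/-- Wrapper of `hent_comp_inj` convenient for defeq rewriting. -/
lemma hent_congr_inj {T U : Type*} [Fintype T] [Fintype U] (F : Ω → T) (G : Ω → U)
    (φ : T → U) (hφ : Function.Injective φ) (h : ∀ ω, G ω = φ (F ω)) :
    Hent Pr G = Hent Pr F := by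
  have hG : G = fun ω => φ (F ω) := funext h
  rw [hG]
  exact hent_comp_inj Pr F φ hφ

variable {E : Type*} [Fintype E] [DecidableEq E] {V : E → Type*} [∀ s, Fintype (V s)]
  [∀ s, MeasurableSpace (V s)] [∀ s, MeasurableSingletonClass (V s)]
  (Z : (s : E) → Ω → V s)

/-- Extension of a tuple on `D` by the value `y` at `t`. -/
noncomputable def extFun {D : Finset E} {t : E} (z : (a : ↥D) → V a) (y : V t) :
    (a : ↥(insert t D)) → V a :=
  fun a => if h : (a : E) ∈ D then z ⟨a, h⟩
    else cast (congrArg V (((Finset.mem_insert.mp a.2).resolve_right h).symm)) y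

lemma extFun_self {D : Finset E} {t : E} (ht : t ∉ D) (z : (a : ↥D) → V a) (y : V t) :
    extFun z y ⟨t, Finset.mem_insert_self t D⟩ = y := by
  simp only [extFun, dif_neg ht]
  exact cast_eq _ y

lemma extFun_mem {D : Finset E} {t : E} (z : (a : ↥D) → V a) (y : V t) {a : E} (ha : a ∈ D) :
    extFun z y ⟨a, Finset.mem_insert_of_mem ha⟩ = z ⟨a, ha⟩ :=
  dif_pos ha

lemma evT_insert {D : Finset E} {t : E} (ht : t ∉ D) (z : (a : ↥D) → V a) (y : V t) :
    {ω | ∀ a : ↥(insert t D), Z a ω = extFun z y a}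
      = {ω | ∀ a : ↥D, Z a ω = z a} ∩ {ω | Z t ω = y} := by
  ext ω
  simp only [Set.mem_setOf_eq, Set.mem_inter_iff]
  constructor
  · intro h
    refine ⟨fun a => ?_, ?_⟩
    · have := h ⟨a, Finset.mem_insert_of_mem a.2⟩
      rwa [extFun_mem z y a.2] at this
    · have := h ⟨t, Finset.mem_insert_self t D⟩
      rwa [extFun_self ht z y] at this
  · rintro ⟨h1, h2⟩ a
    obtain ⟨a, ha⟩ := a
    rcases Finset.mem_insert.mp ha with h3 | h3
    · subst h3
      exact h2.trans (extFun_self ht z y).symm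
    · exact (h1 ⟨a, h3⟩).trans (extFun_mem z y h3).symm

lemma mTuple (hZ : ∀ s, Measurable (Z s)) (A : Finset E) (z : (a : ↥A) → V a) :
    MeasurableSet {ω | ∀ a : ↥A, Z a ω = z a} := by
  have : {ω | ∀ a : ↥A, Z a ω = z a} = ⋂ a : ↥A, {ω | Z a ω = z a} := by
    ext ω
    simp
  rw [this]
  exact MeasurableSet.iInter (fun a => mEv (hZ a) (z a))

lemma tupleRV_event (A : Finset E) (z : (a : ↥A) → V a) :
    {ω | tupleRV Z A ω = z} = {ω | ∀ a : ↥A, Z a ω = z a} := by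
  ext ω
  simp [tupleRV, funext_iff]

lemma prod_subtype_insert {D : Finset E} {t : E} (ht : t ∉ D)
    (f : (a : ↥(insert t D)) → ℝ) :
    ∏ a : ↥(insert t D), f a
      = f ⟨t, Finset.mem_insert_self t D⟩
        * ∏ a : ↥D, f ⟨a, Finset.mem_insert_of_mem a.2⟩ := by
  rw [Finset.univ_eq_attach, Finset.attach_insert, Finset.prod_insert, Finset.prod_image]
  · rw [Finset.univ_eq_attach]
  · intro x _ y _ h
    have hval := congrArg (fun u : ↥(insert t D) => (u : E)) h
    exact Subtype.ext hval
  · intro hmem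
    obtain ⟨x, _, hx⟩ := Finset.mem_image.mp hmem
    have hxt : (x : E) = t := congrArg (fun u : ↥(insert t D) => (u : E)) hx
    exact ht (hxt ▸ x.2)

variable {S : Type*} [Fintype S] [MeasurableSpace S] [MeasurableSingletonClass S]
  (X : Ω → S)

/-- Marginal conditional independence over an arbitrary subset of coordinates. -/
lemma marg_indep (hX : Measurable X) (hZ : ∀ s, Measurable (Z s))
    (hindep : FamilyCondIndepGiven Pr X Z) (x : S)
    (hx : (Pr {ω | X ω = x}).toReal ≠ 0) (D : Finset E) :
    ∀ z : (a : ↥D) → V a,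
      (Pr ({ω | ∀ a : ↥D, Z a ω = z a} ∩ {ω | X ω = x})).toReal
          / (Pr {ω | X ω = x}).toReal
        = ∏ a : ↥D, (Pr ({ω | Z (a : E) ω = z a} ∩ {ω | X ω = x})).toReal
            / (Pr {ω | X ω = x}).toReal := by
  have hx' : Pr {ω | X ω = x} ≠ 0 := by
    intro h0
    exact hx (by rw [h0]; simp)
  -- one-coordinate removal step
  have step : ∀ {D : Finset E} {t : E}, t ∉ D →
      (∀ z' : (a : ↥(insert t D)) → V a,
        (Pr ({ω | ∀ a : ↥(insert t D), Z a ω = z' a} ∩ {ω | X ω = x})).toReal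
            / (Pr {ω | X ω = x}).toReal
          = ∏ a : ↥(insert t D), (Pr ({ω | Z (a : E) ω = z' a} ∩ {ω | X ω = x})).toReal
              / (Pr {ω | X ω = x}).toReal) →
      ∀ z : (a : ↥D) → V a,
        (Pr ({ω | ∀ a : ↥D, Z a ω = z a} ∩ {ω | X ω = x})).toReal
            / (Pr {ω | X ω = x}).toReal
          = ∏ a : ↥D, (Pr ({ω | Z (a : E) ω = z a} ∩ {ω | X ω = x})).toReal
              / (Pr {ω | X ω = x}).toReal := by
    intro D t ht h z
    have hpart : (Pr ({ω | ∀ a : ↥D, Z a ω = z a} ∩ {ω | X ω = x})).toReal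
        = ∑ y : V t,
          (Pr ({ω | ∀ a : ↥(insert t D), Z a ω = extFun z y a} ∩ {ω | X ω = x})).toReal := by
      rw [← sum_pr_inter Pr ((mTuple Z hZ D z).inter (mEv hX x)) (Z t) (fun y => mEv (hZ t) y)]
      refine Finset.sum_congr rfl fun y _ => ?_
      have hsets : ({ω | ∀ a : ↥D, Z a ω = z a} ∩ {ω | X ω = x}) ∩ {ω | Z t ω = y}
          = {ω | ∀ a : ↥(insert t D), Z a ω = extFun z y a} ∩ {ω | X ω = x} := by
        rw [evT_insert Z ht z y]
        ext ω
        simp only [Set.mem_inter_iff, Set.mem_setOf_eq]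
        tauto
      rw [hsets]
    rw [hpart, Finset.sum_div]
    have hterm : ∀ y : V t,
        (Pr ({ω | ∀ a : ↥(insert t D), Z a ω = extFun z y a} ∩ {ω | X ω = x})).toReal
            / (Pr {ω | X ω = x}).toReal
          = ((Pr ({ω | Z t ω = y} ∩ {ω | X ω = x})).toReal / (Pr {ω | X ω = x}).toReal)
            * ∏ a : ↥D, (Pr ({ω | Z (a : E) ω = z a} ∩ {ω | X ω = x})).toReal
                / (Pr {ω | X ω = x}).toReal := by
      intro y
      rw [h (extFun z y), prod_subtype_insert ht]
      congr 1
      · rw [extFun_self ht z y]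
      · refine Finset.prod_congr rfl fun a _ => ?_
        congr 2
        rw [extFun_mem z y a.2]
    rw [Finset.sum_congr rfl (fun y _ => hterm y), ← Finset.sum_mul]
    have hone : ∑ y : V t,
        (Pr ({ω | Z t ω = y} ∩ {ω | X ω = x})).toReal / (Pr {ω | X ω = x}).toReal = 1 := by
      rw [← Finset.sum_div]
      have hs := sum_pr_inter Pr (mEv hX x) (Z t) (fun y => mEv (hZ t) y)
      have hs2 : ∑ y : V t, (Pr ({ω | Z t ω = y} ∩ {ω | X ω = x})).toReal
          = (Pr {ω | X ω = x}).toReal := by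
        rw [← hs]
        exact Finset.sum_congr rfl fun y _ => by rw [Set.inter_comm]
      rw [hs2, div_self hx]
    rw [hone, one_mul]
  -- downward induction on the complement
  suffices hR : ∀ (R D : Finset E), D = Rᶜ →
      ∀ z : (a : ↥D) → V a,
        (Pr ({ω | ∀ a : ↥D, Z a ω = z a} ∩ {ω | X ω = x})).toReal
            / (Pr {ω | X ω = x}).toReal
          = ∏ a : ↥D, (Pr ({ω | Z (a : E) ω = z a} ∩ {ω | X ω = x})).toReal
              / (Pr {ω | X ω = x}).toReal by
    exact hR Dᶜ D (compl_compl D).symm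
  intro R
  induction R using Finset.induction_on with
  | empty =>
      intro D hD z
      rw [Finset.compl_empty] at hD
      subst hD
      have hfull := hindep x hx' (fun t => z ⟨t, Finset.mem_univ t⟩)
      have hset : {ω | (∀ s, Z s ω = z ⟨s, Finset.mem_univ s⟩) ∧ X ω = x}
          = {ω | ∀ a : ↥(Finset.univ : Finset E), Z a ω = z a} ∩ {ω | X ω = x} := by
        ext ω
        simp only [Set.mem_setOf_eq, Set.mem_inter_iff]
        constructor
        · rintro ⟨h1, h2⟩
          exact ⟨fun a => h1 a, h2⟩
        · rintro ⟨h1, h2⟩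
          exact ⟨fun s => h1 ⟨s, Finset.mem_univ s⟩, h2⟩
      have hset2 : ∀ t : E, {ω | Z t ω = z ⟨t, Finset.mem_univ t⟩ ∧ X ω = x}
          = {ω | Z t ω = z ⟨t, Finset.mem_univ t⟩} ∩ {ω | X ω = x} := by
        intro t
        rfl
      rw [hset] at hfull
      simp only [hset2] at hfull
      rw [hfull]
      exact (Fintype.prod_equiv (Equiv.subtypeUnivEquiv (fun a => Finset.mem_univ a)) _ _
        (fun a => rfl)).symm
  | @insert t R' ht ih =>
      intro D hD z
      rw [Finset.compl_insert] at hD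
      subst hD
      have htR : t ∈ R'ᶜ := Finset.mem_compl.mpr ht
      have htD : t ∉ R'ᶜ.erase t := Finset.notMem_erase t _
      refine step htD ?_ z
      have hins : insert t (R'ᶜ.erase t) = R'ᶜ := Finset.insert_erase htR
      intro z'
      -- transport along `hins`
      have := ih R'ᶜ rfl
      rw [← hins] at this
      exact this z'

end Indep

section Main
variable {Ω : Type*} [MeasurableSpace Ω] (Pr : Measure Ω) [IsProbabilityMeasure Pr]
variable {E : Type*} [Fintype E] [DecidableEq E] {V : E → Type*} [∀ s, Fintype (V s)]
  [∀ s, MeasurableSpace (V s)] [∀ s, MeasurableSingletonClass (V s)]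
  (Z : (s : E) → Ω → V s)
variable {S : Type*} [Fintype S] [MeasurableSpace S] [MeasurableSingletonClass S]
  (X : Ω → S)

lemma group_indep (hX : Measurable X) (hZ : ∀ s, Measurable (Z s))
    (hindep : FamilyCondIndepGiven Pr X Z) (x : S) {C : Finset E} {s : E} (hs : s ∉ C)
    (hx : (Pr {ω | X ω = x}).toReal ≠ 0) (z : (a : ↥C) → V a) (v : V s) :
    (Pr (({ω | ∀ a : ↥C, Z a ω = z a} ∩ {ω | Z s ω = v}) ∩ {ω | X ω = x})).toReal
        * (Pr {ω | X ω = x}).toReal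
      = (Pr ({ω | ∀ a : ↥C, Z a ω = z a} ∩ {ω | X ω = x})).toReal
        * (Pr ({ω | Z s ω = v} ∩ {ω | X ω = x})).toReal := by
  have h1 := marg_indep Pr Z X hX hZ hindep x hx (insert s C) (extFun z v)
  rw [evT_insert Z hs z v, prod_subtype_insert hs] at h1
  have hprod : ∏ a : ↥C,
      (Pr ({ω | Z (a : E) ω = extFun z v ⟨a, Finset.mem_insert_of_mem a.2⟩}
        ∩ {ω | X ω = x})).toReal / (Pr {ω | X ω = x}).toReal
      = ∏ a : ↥C, (Pr ({ω | Z (a : E) ω = z a} ∩ {ω | X ω = x})).toReal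
          / (Pr {ω | X ω = x}).toReal := by
    refine Finset.prod_congr rfl fun a _ => ?_
    congr 3
    rw [extFun_mem z v a.2]
  rw [hprod, extFun_self hs z v] at h1
  have h2 := marg_indep Pr Z X hX hZ hindep x hx C z
  rw [← h2] at h1
  rw [div_eq_iff hx] at h1
  rw [h1]
  field_simp

lemma condEnt_pairX (hX : Measurable X) (hZ : ∀ s, Measurable (Z s))
    (hindep : FamilyCondIndepGiven Pr X Z) {C : Finset E} {s : E} (hs : s ∉ C) :
    condEnt Pr (fun ω => (X ω, tupleRV Z C ω)) (Z s) = condEnt Pr X (Z s) := by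
  unfold condEnt
  rw [Fintype.sum_prod_type]
  refine Finset.sum_congr rfl fun x _ => ?_
  have hpair_set : ∀ z : (a : ↥C) → V a, {ω | (X ω, tupleRV Z C ω) = (x, z)}
      = {ω | X ω = x} ∩ {ω | ∀ a : ↥C, Z a ω = z a} := by
    intro z
    ext ω
    simp [Prod.ext_iff, tupleRV, funext_iff]
  have hterm : ∀ z : (a : ↥C) → V a,
      (Pr {ω | (X ω, tupleRV Z C ω) = (x, z)}).toReal
          * ∑ v, Real.negMulLog (condp Pr (fun ω => (X ω, tupleRV Z C ω)) (Z s) (x, z) v)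
        = (Pr {ω | (X ω, tupleRV Z C ω) = (x, z)}).toReal
          * ∑ v, Real.negMulLog (condp Pr X (Z s) x v) := by
    intro z
    by_cases h0 : (Pr {ω | (X ω, tupleRV Z C ω) = (x, z)}).toReal = 0
    · rw [h0, zero_mul, zero_mul]
    · have hsub : {ω | (X ω, tupleRV Z C ω) = (x, z)} ⊆ {ω | X ω = x} := by
        intro ω h
        exact (Prod.ext_iff.mp h).1
      have hx : (Pr {ω | X ω = x}).toReal ≠ 0 :=
        fun hpx => h0 (pr_zero_of_subset Pr hsub hpx)
      congr 1
      refine Finset.sum_congr rfl fun v _ => ?_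
      congr 1
      rw [condp_of_ne Pr _ _ _ _ h0, condp_of_ne Pr _ _ _ _ hx]
      have hgi := group_indep Pr Z X hX hZ hindep x hs hx z v
      have hA : {ω | (X ω, tupleRV Z C ω) = (x, z)} ∩ {ω | Z s ω = v}
          = ({ω | ∀ a : ↥C, Z a ω = z a} ∩ {ω | Z s ω = v}) ∩ {ω | X ω = x} := by
        rw [hpair_set z]
        ext ω
        simp only [Set.mem_inter_iff, Set.mem_setOf_eq]
        tauto
      have hB : {ω | (X ω, tupleRV Z C ω) = (x, z)}
          = {ω | ∀ a : ↥C, Z a ω = z a} ∩ {ω | X ω = x} := by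
        rw [hpair_set z, Set.inter_comm]
      have hC : {ω | X ω = x} ∩ {ω | Z s ω = v} = {ω | Z s ω = v} ∩ {ω | X ω = x} :=
        Set.inter_comm _ _
      rw [hA, hB, hC]
      rw [hB] at h0
      rw [div_eq_div_iff h0 hx]
      linear_combination hgi
  rw [Finset.sum_congr rfl (fun z _ => hterm z), ← Finset.sum_mul]
  congr 1
  have hms := sum_pr_inter Pr (mEv hX x) (tupleRV Z C)
    (fun z => by rw [tupleRV_event]; exact mTuple Z hZ C z)
  rw [← hms]
  refine Finset.sum_congr rfl fun z _ => ?_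
  congr 1
  rw [hpair_set z, ← tupleRV_event]

lemma mi_step (hX : Measurable X) (hZ : ∀ s, Measurable (Z s))
    (hindep : FamilyCondIndepGiven Pr X Z) {C : Finset E} {s : E} (hs : s ∉ C) :
    mutualInfo Pr X (tupleRV Z (insert s C))
      = mutualInfo Pr X (tupleRV Z C) + condEnt Pr (tupleRV Z C) (Z s)
        - condEnt Pr X (Z s) := by
  have mT : ∀ (D : Finset E) (z : (a : ↥D) → V a), MeasurableSet {ω | tupleRV Z D ω = z} :=
    fun D z => by rw [tupleRV_event]; exact mTuple Z hZ D z
  have mZs : ∀ v, MeasurableSet {ω | Z s ω = v} := mEv (hZ s)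
  have mPair : ∀ p : S × ((a : ↥C) → V a), MeasurableSet {ω | (X ω, tupleRV Z C ω) = p} := by
    intro p
    have : {ω | (X ω, tupleRV Z C ω) = p}
        = {ω | X ω = p.1} ∩ {ω | tupleRV Z C ω = p.2} := by
      ext ω
      simp [Prod.ext_iff]
    rw [this]
    exact (mEv hX p.1).inter (mT C p.2)
  have hφ : Function.Injective (fun t : (a : ↥(insert s C)) → V a =>
      ((fun a : ↥C => t ⟨a, Finset.mem_insert_of_mem a.2⟩,
        t ⟨s, Finset.mem_insert_self s C⟩) : ((a : ↥C) → V a) × V s)) := by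
    intro t t' h
    have h1 := congrArg Prod.fst h
    have h2 := congrArg Prod.snd h
    simp only at h1 h2
    funext a
    obtain ⟨a, ha⟩ := a
    rcases Finset.mem_insert.mp ha with h3 | h3
    · subst h3
      exact h2
    · exact congrFun h1 ⟨a, h3⟩
  have e1 : Hent Pr (fun ω => (tupleRV Z C ω, Z s ω))
      = Hent Pr (tupleRV Z (insert s C)) :=
    hent_congr_inj Pr (tupleRV Z (insert s C)) _ _ hφ (fun ω => rfl)
  have e2 : Hent Pr (fun ω => (tupleRV Z C ω, Z s ω))
      = Hent Pr (tupleRV Z C) + condEnt Pr (tupleRV Z C) (Z s) :=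
    hent_pair Pr _ _ (mT C) mZs
  have hψ : Function.Injective (fun p : S × ((a : ↥(insert s C)) → V a) =>
      (((p.1, fun a : ↥C => p.2 ⟨a, Finset.mem_insert_of_mem a.2⟩),
        p.2 ⟨s, Finset.mem_insert_self s C⟩) : (S × ((a : ↥C) → V a)) × V s)) := by
    intro p p' h
    have h1 : p.1 = p'.1 := congrArg (fun q => q.1.1) h
    have h2 := congrArg (fun q : (S × ((a : ↥C) → V a)) × V s => ((q.1.2, q.2) :
      ((a : ↥C) → V a) × V s)) h
    have h3 : p.2 = p'.2 := hφ h2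
    exact Prod.ext h1 h3
  have e3 : Hent Pr (fun ω => ((X ω, tupleRV Z C ω), Z s ω))
      = Hent Pr (fun ω => (X ω, tupleRV Z (insert s C) ω)) :=
    hent_congr_inj Pr (fun ω => (X ω, tupleRV Z (insert s C) ω)) _ _ hψ (fun ω => rfl)
  have e4 : Hent Pr (fun ω => ((X ω, tupleRV Z C ω), Z s ω))
      = Hent Pr (fun ω => (X ω, tupleRV Z C ω))
        + condEnt Pr (fun ω => (X ω, tupleRV Z C ω)) (Z s) :=
    hent_pair Pr (fun ω => (X ω, tupleRV Z C ω)) (Z s) mPair mZs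
  have e5 := condEnt_pairX Pr Z X hX hZ hindep hs
  unfold mutualInfo
  rw [← e1, ← e3, e2, e4, e5]
  ring

end Main


/-- If the family `(Z s)_{s ∈ E}` is conditionally independent given `X`, then the set
function `A ↦ I(X; Z_A)` is submodular: for `A ⊆ B` and `s ∉ B`,
`I(X; Z_{A ∪ {s}}) − I(X; Z_A) ≥ I(X; Z_{B ∪ {s}}) − I(X; Z_B)`. -/
theorem mutualInfo_tuple_submodular
    {Ω : Type*} [MeasurableSpace Ω] (Pr : Measure Ω) [IsProbabilityMeasure Pr]
    {S : Type*} [Fintype S] [MeasurableSpace S] [MeasurableSingletonClass S]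
    {E : Type*} [Fintype E] [DecidableEq E]
    {V : E → Type*} [∀ s, Fintype (V s)]
    [∀ s, MeasurableSpace (V s)] [∀ s, MeasurableSingletonClass (V s)]
    (X : Ω → S) (hX : Measurable X)
    (Z : (s : E) → Ω → V s) (hZ : ∀ s, Measurable (Z s))
    (hindep : FamilyCondIndepGiven Pr X Z)
    (A B : Finset E) (hAB : A ⊆ B) (s : E) (hs : s ∉ B) :
    mutualInfo Pr X (tupleRV Z (insert s A)) - mutualInfo Pr X (tupleRV Z A)
      ≥ mutualInfo Pr X (tupleRV Z (insert s B)) - mutualInfo Pr X (tupleRV Z B) := by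
  have hsA : s ∉ A := fun h => hs (hAB h)
  rw [mi_step Pr Z X hX hZ hindep hsA, mi_step Pr Z X hX hZ hindep hs]
  have hmono : condEnt Pr (tupleRV Z B) (Z s) ≤ condEnt Pr (tupleRV Z A) (Z s) := by
    have := condEnt_comp_ge Pr (tupleRV Z B)
      (fun t : (b : ↥B) → V b => (fun a : ↥A => t ⟨a, hAB a.2⟩ : (a : ↥A) → V a)) (Z s)
      (fun z => by rw [tupleRV_event]; exact mTuple Z hZ B z) (mEv (hZ s))
    exact this
  linarith
end

section
/- Let X and W be random variables taking values in finite sets, let E be a finite index set, and for each s ∈ E let Z_s be a random variable taking values in a finite set, all on a common probability space. Assume that the family consisting of W together with all the Z_s, s ∈ E, is conditionally independent given X. For a finite set A ⊆ E write Z_A for the tuple (Z_s)_{s ∈ A}. Then the set function A ↦ I(X; Z_A | W) is submodular and nondecreasing, with I(X; Z_∅ | W) = 0. -/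
/-!
Write `I(X; Z_A | W) = H(X | W) - H(X | Z_A, W)`. Monotonicity is then the fact that
conditioning reduces entropy, i.e. strong subadditivity, which is Gibbs' inequality applied
slice by slice. For `s ∉ A`, symmetry of conditional mutual information turns the increment
`H(X | Z_A, W) - H(X | Z_s, Z_A, W)` into `H(Z_s | Z_A, W) - H(Z_s | X, Z_A, W)`, and the
conditional independence given `X` makes the last term `H(Z_s | X)`, which does not depend on `A`.
So the increment is antitone in `A`, again because conditioning reduces entropy.
-/

open MeasureTheory

/-- The family consisting of `W` together with all the `Z s`, `s ∈ E`, is conditionally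
independent given `X`: whenever `P(X=x) > 0`, the conditional joint distribution of
`(W, (Z s)_s)` given `X = x` is the product of the conditional marginals. -/
def FamilyWithWCondIndepGiven {Ω : Type*} [MeasurableSpace Ω] (Pr : Measure Ω)
    {S VW : Type*} {E : Type*} [Fintype E] {V : E → Type*}
    (X : Ω → S) (W : Ω → VW) (Z : (s : E) → Ω → V s) : Prop :=
  ∀ x : S, Pr {ω | X ω = x} ≠ 0 → ∀ (w : VW) (z : (s : E) → V s),
    (Pr {ω | W ω = w ∧ (∀ s, Z s ω = z s) ∧ X ω = x}).toReal / (Pr {ω | X ω = x}).toReal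
      = ((Pr {ω | W ω = w ∧ X ω = x}).toReal / (Pr {ω | X ω = x}).toReal)
        * ∏ s : E, ((Pr {ω | Z s ω = z s ∧ X ω = x}).toReal / (Pr {ω | X ω = x}).toReal)

/-- A set function `F` on finite subsets of `E` is submodular if
`F (A ∪ {s}) − F A ≥ F (B ∪ {s}) − F B` for all finite `A ⊆ B` and all `s ∉ B`. -/
def Submodular {E : Type*} [DecidableEq E] (F : Finset E → ℝ) : Prop :=
  ∀ A B : Finset E, A ⊆ B → ∀ s ∉ B,
    F (insert s A) - F A ≥ F (insert s B) - F B

open Real Finset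

section Arrays

variable {α β : Type*} [Fintype α] [Fintype β]

lemma sub_le_mul_log_div {p q : ℝ} (hp : 0 ≤ p) (hq : 0 ≤ q) (hpq : 0 < p → 0 < q) :
    p - q ≤ p * log (p / q) := by
  rcases hp.eq_or_lt with rfl | hp
  · simpa using hq
  · have h := one_sub_inv_le_log_of_pos (div_pos hp (hpq hp))
    rw [inv_div] at h
    calc p - q = p * (1 - q / p) := by field_simp
      _ ≤ p * log (p / q) := mul_le_mul_of_nonneg_left h hp.le

lemma marginals_pos_of_pos {p : α → β → ℝ} (hp : ∀ a b, 0 ≤ p a b) {a : α} {b : β}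
    (hpos : 0 < p a b) :
    0 < ∑ b', p a b' ∧ 0 < ∑ a', p a' b ∧ 0 < ∑ a', ∑ b', p a' b' := by
  have hrow := hpos.trans_le (single_le_sum (fun b _ => hp a b) (mem_univ b))
  refine ⟨hrow, hpos.trans_le (single_le_sum (fun a _ => hp a b) (mem_univ a)), ?_⟩
  exact hrow.trans_le (single_le_sum (fun a _ => sum_nonneg fun b _ => hp a b) (mem_univ a))

/-- The left-hand side is the mutual information of the unnormalised joint distribution `p`,
whose marginals are its row and column sums. -/
lemma sum_mul_log_div_eq (p : α → β → ℝ) (hp : ∀ a b, 0 ≤ p a b) :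
    ∑ a, ∑ b, p a b * log (p a b / ((∑ b', p a b') * (∑ a', p a' b) / ∑ a', ∑ b', p a' b'))
      = ∑ a, negMulLog (∑ b, p a b) + ∑ b, negMulLog (∑ a, p a b)
        - ∑ a, ∑ b, negMulLog (p a b) - negMulLog (∑ a, ∑ b, p a b) := by
  set T := ∑ a, ∑ b, p a b
  have hterm : ∀ a b, p a b * log (p a b / ((∑ b', p a b') * (∑ a', p a' b) / T))
      = -p a b * log (∑ b', p a b') - p a b * log (∑ a', p a' b)
        - negMulLog (p a b) + p a b * log T := by
    intro a b
    rcases (hp a b).eq_or_lt with h0 | hpos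
    · simp [← h0]
    obtain ⟨hr, hc, hT⟩ := marginals_pos_of_pos hp hpos
    rw [log_div hpos.ne' (by positivity), log_div (by positivity) hT.ne',
      log_mul hr.ne' hc.ne', negMulLog]
    ring
  simp only [hterm, sum_add_distrib, sum_sub_distrib, ← sum_mul]
  rw [sum_comm (f := fun a b => p a b * log (∑ a', p a' b))]
  simp only [← sum_mul, negMulLog, neg_mul, sum_neg_distrib, T]
  ring

lemma sum_negMulLog_add_negMulLog_sum_le (p : α → β → ℝ) (hp : ∀ a b, 0 ≤ p a b) :
    ∑ a, ∑ b, negMulLog (p a b) + negMulLog (∑ a, ∑ b, p a b)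
      ≤ ∑ a, negMulLog (∑ b, p a b) + ∑ b, negMulLog (∑ a, p a b) := by
  have hmass : ∑ a, ∑ b, (∑ b', p a b') * (∑ a', p a' b) / ∑ a', ∑ b', p a' b'
      = ∑ a, ∑ b, p a b := by
    simp only [← sum_div, ← sum_mul_sum]
    rw [sum_comm (f := fun b a => p a b)]
    exact mul_self_div_self _
  have hgibbs := sum_le_sum fun a (_ : a ∈ univ) => sum_le_sum fun b (_ : b ∈ univ) =>
    sub_le_mul_log_div (hp a b)
      (div_nonneg (mul_nonneg (sum_nonneg fun b _ => hp a b) (sum_nonneg fun a _ => hp a b))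
        (sum_nonneg fun a _ => sum_nonneg fun b _ => hp a b))
      fun hpos => by obtain ⟨hr, hc, hT⟩ := marginals_pos_of_pos hp hpos; positivity
  rw [sum_mul_log_div_eq p hp] at hgibbs
  simp only [sum_sub_distrib, hmass] at hgibbs
  linarith

lemma sum_negMulLog_add_negMulLog_sum_eq_of_mul_eq (p : α → β → ℝ) (hp : ∀ a b, 0 ≤ p a b)
    (hfac : ∀ a b, p a b ≠ 0 →
      p a b * ∑ a', ∑ b', p a' b' = (∑ b', p a b') * (∑ a', p a' b)) :
    ∑ a, ∑ b, negMulLog (p a b) + negMulLog (∑ a, ∑ b, p a b)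
      = ∑ a, negMulLog (∑ b, p a b) + ∑ b, negMulLog (∑ a, p a b) := by
  have hzero : ∑ a, ∑ b, p a b * log (p a b / ((∑ b', p a b') * (∑ a', p a' b)
      / ∑ a', ∑ b', p a' b')) = 0 := by
    refine sum_eq_zero fun a _ => sum_eq_zero fun b _ => ?_
    rcases (hp a b).eq_or_lt with h0 | hpos
    · simp [← h0]
    obtain ⟨-, -, hT⟩ := marginals_pos_of_pos hp hpos
    rw [← hfac a b hpos.ne', mul_div_cancel_right₀ _ hT.ne', div_self hpos.ne', log_one, mul_zero]
  rw [sum_mul_log_div_eq p hp] at hzero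
  linarith

end Arrays

lemma exists_eq_of_negMulLog_ne_zero {Ω α : Type*} [MeasurableSpace Ω] {Pr : Measure Ω}
    {U : Ω → α} {a : α} (h : negMulLog (Pr.real {ω | U ω = a}) ≠ 0) : ∃ ω, U ω = a := by
  by_contra! hne
  simp [hne] at h

section Entropy

variable {Ω : Type*} [MeasurableSpace Ω] {Pr : Measure Ω}
  {α β γ : Type*} [Fintype α] [Fintype β] [Fintype γ]

lemma Hent_eq_of_comp_eq_of_comp {U : Ω → α} {V : Ω → β} (f : α → β) (g : β → α)
    (hf : ∀ ω, V ω = f (U ω)) (hg : ∀ ω, U ω = g (V ω)) : Hent Pr U = Hent Pr V := by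
  have hfiber : ∀ ω₀, {ω | U ω = U ω₀} = {ω | V ω = f (U ω₀)} := fun ω₀ => Set.ext fun ω => by
    simp only [Set.mem_ofPred_eq]
    exact ⟨fun h => by rw [hf, h], fun h => by rw [hg, h, ← hf, ← hg]⟩
  -- `f` matches the nonempty fibres of `U` with those of `V`; empty fibres contribute `0`.
  refine sum_bij_ne_zero (fun a _ _ => f a) (fun _ _ _ => mem_univ _) ?_ ?_ ?_
  · intro a₁ _ h₁ a₂ _ h₂ heq
    obtain ⟨ω₁, rfl⟩ := exists_eq_of_negMulLog_ne_zero h₁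
    obtain ⟨ω₂, rfl⟩ := exists_eq_of_negMulLog_ne_zero h₂
    rw [hg ω₁, hg ω₂, hf ω₁, hf ω₂, heq]
  · intro b _ hb
    obtain ⟨ω, rfl⟩ := exists_eq_of_negMulLog_ne_zero hb
    refine ⟨U ω, mem_univ _, ?_, (hf ω).symm⟩
    rwa [hfiber, ← hf]
  · intro a _ ha
    obtain ⟨ω₀, rfl⟩ := exists_eq_of_negMulLog_ne_zero ha
    rw [hfiber]

lemma condHent_congr {U : Ω → α} {K : Ω → β} {L : Ω → γ} (f : β → γ) (g : γ → β)
    (hf : ∀ ω, L ω = f (K ω)) (hg : ∀ ω, K ω = g (L ω)) :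
    condHent Pr U K = condHent Pr U L := by
  rw [condHent, condHent, Hent_eq_of_comp_eq_of_comp f g hf hg,
    Hent_eq_of_comp_eq_of_comp (U := fun ω => (U ω, K ω)) (V := fun ω => (U ω, L ω))
      (Prod.map id f) (Prod.map id g) (fun ω => by simp [hf]) (fun ω => by simp [hg])]

lemma condMutualInfo_eq_condHent_sub_condHent (U : Ω → α) (V : Ω → β) (K : Ω → γ) :
    condMutualInfo Pr U V K = condHent Pr U K - condHent Pr U (fun ω => (V ω, K ω)) := by
  have hassoc : Hent Pr (fun ω => ((U ω, V ω), K ω)) = Hent Pr (fun ω => (U ω, V ω, K ω)) :=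
    Hent_eq_of_comp_eq_of_comp (Equiv.prodAssoc α β γ) (Equiv.prodAssoc α β γ).symm
      (fun _ => rfl) (fun _ => rfl)
  simp only [condMutualInfo, condHent, hassoc]
  ring

lemma condHent_sub_condHent_prod_comm (U : Ω → α) (V : Ω → β) (K : Ω → γ) :
    condHent Pr U K - condHent Pr U (fun ω => (V ω, K ω))
      = condHent Pr V K - condHent Pr V (fun ω => (U ω, K ω)) := by
  have hswap : Hent Pr (fun ω => (U ω, V ω, K ω)) = Hent Pr (fun ω => (V ω, U ω, K ω)) :=
    Hent_eq_of_comp_eq_of_comp (fun q => (q.2.1, q.1, q.2.2)) (fun q => (q.2.1, q.1, q.2.2))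
      (fun _ => rfl) (fun _ => rfl)
  simp only [condHent, hswap]
  ring

lemma Hent_eq_sum {U : Ω → α} : Hent Pr U = ∑ a, negMulLog (Pr.real {ω | U ω = a}) := rfl

lemma Hent_prod_eq {V : Ω → β} {W : Ω → γ} :
    Hent Pr (fun ω => (V ω, W ω)) = ∑ c, ∑ b, negMulLog (Pr.real {ω | V ω = b ∧ W ω = c}) := by
  simp only [Hent, Fintype.sum_prod_type_right, Prod.mk.injEq, measureReal_def]

lemma Hent_prod_prod_eq {U : Ω → α} {V : Ω → β} {W : Ω → γ} :
    Hent Pr (fun ω => (U ω, V ω, W ω))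
      = ∑ c, ∑ b, ∑ a, negMulLog (Pr.real {ω | U ω = a ∧ V ω = b ∧ W ω = c}) := by
  simp only [Hent, Fintype.sum_prod_type_right, Prod.mk.injEq, measureReal_def]

end Entropy

section Measurable

variable {Ω : Type*} [MeasurableSpace Ω] {Pr : Measure Ω} [IsFiniteMeasure Pr]
  {α β γ : Type*} [MeasurableSpace α] [MeasurableSingletonClass α] [MeasurableSpace β]
  [MeasurableSingletonClass β] [MeasurableSpace γ] [MeasurableSingletonClass γ]
  {U : Ω → α} {V : Ω → β} {W : Ω → γ}

lemma sum_measureReal_fiber_and [Fintype β] (hV : Measurable V) {P : Ω → Prop}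
    (hP : MeasurableSet {ω | P ω}) :
    ∑ b, Pr.real {ω | V ω = b ∧ P ω} = Pr.real {ω | P ω} := by
  have hdisj : Set.PairwiseDisjoint (univ : Finset β) fun b => {ω | V ω = b ∧ P ω} :=
    fun b _ b' _ hbb' => Set.disjoint_left.2 fun ω hb hb' => hbb' (hb.1.symm.trans hb'.1)
  rw [← measureReal_biUnion_finset hdisj fun b _ => (hV (measurableSet_singleton b)).inter hP]
  congr
  ext ω
  simp

lemma sum_measureReal_fiber_fst [Fintype α] (hU : Measurable U) (hV : Measurable V)
    (hW : Measurable W) (b : β) (c : γ) :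
    ∑ a, Pr.real {ω | U ω = a ∧ V ω = b ∧ W ω = c} = Pr.real {ω | V ω = b ∧ W ω = c} :=
  sum_measureReal_fiber_and hU
    ((hV (measurableSet_singleton b)).inter (hW (measurableSet_singleton c)))

lemma sum_measureReal_fiber_snd [Fintype β] (hV : Measurable V) (hW : Measurable W) (c : γ) :
    ∑ b, Pr.real {ω | V ω = b ∧ W ω = c} = Pr.real {ω | W ω = c} :=
  sum_measureReal_fiber_and hV (hW (measurableSet_singleton c))

lemma sum_measureReal_fiber_mid [Fintype β] (hU : Measurable U) (hV : Measurable V)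
    (hW : Measurable W) (a : α) (c : γ) :
    ∑ b, Pr.real {ω | U ω = a ∧ V ω = b ∧ W ω = c} = Pr.real {ω | U ω = a ∧ W ω = c} := by
  rw [← sum_measureReal_fiber_and hV (P := fun ω => U ω = a ∧ W ω = c)
    ((hU (measurableSet_singleton a)).inter (hW (measurableSet_singleton c)))]
  simp only [and_left_comm]

variable [Fintype α] [Fintype β] [Fintype γ]

lemma condHent_prod_le (hU : Measurable U) (hV : Measurable V) (hW : Measurable W) :
    condHent Pr U (fun ω => (V ω, W ω)) ≤ condHent Pr U W := by
  have hslice : ∀ c, ∑ b, ∑ a, negMulLog (Pr.real {ω | U ω = a ∧ V ω = b ∧ W ω = c})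
      + negMulLog (Pr.real {ω | W ω = c})
      ≤ ∑ b, negMulLog (Pr.real {ω | V ω = b ∧ W ω = c})
        + ∑ a, negMulLog (Pr.real {ω | U ω = a ∧ W ω = c}) := fun c => by
    simpa only [sum_measureReal_fiber_fst hU hV hW, sum_measureReal_fiber_snd hV hW,
      sum_measureReal_fiber_mid hU hV hW] using sum_negMulLog_add_negMulLog_sum_le
        (fun b a => Pr.real {ω | U ω = a ∧ V ω = b ∧ W ω = c}) fun _ _ => measureReal_nonneg
  have hsum := sum_le_sum fun c (_ : c ∈ univ) => hslice c
  simp only [sum_add_distrib] at hsum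
  rw [condHent, condHent, Hent_prod_prod_eq, Hent_prod_eq, Hent_prod_eq, Hent_eq_sum]
  linarith

lemma condHent_le_condHent_of_comp {δ : Type*} [Fintype δ] [MeasurableSpace δ]
    [MeasurableSingletonClass δ] {K : Ω → δ} (hU : Measurable U) (hK : Measurable K)
    (hW : Measurable W) (f : δ → γ) (hf : ∀ ω, W ω = f (K ω)) :
    condHent Pr U K ≤ condHent Pr U W := by
  rw [condHent_congr (L := fun ω => (K ω, W ω)) (fun k => (k, f k)) Prod.fst
    (fun ω => by rw [hf]) fun _ => rfl]
  exact condHent_prod_le hU hK hW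

lemma condHent_prod_eq_of_condIndep (hU : Measurable U) (hV : Measurable V) (hW : Measurable W)
    (hfac : ∀ a b c, Pr.real {ω | U ω = a ∧ V ω = b ∧ W ω = c} ≠ 0 →
      Pr.real {ω | U ω = a ∧ V ω = b ∧ W ω = c} * Pr.real {ω | W ω = c}
        = Pr.real {ω | U ω = a ∧ W ω = c} * Pr.real {ω | V ω = b ∧ W ω = c}) :
    condHent Pr U (fun ω => (V ω, W ω)) = condHent Pr U W := by
  have hslice : ∀ c, ∑ b, ∑ a, negMulLog (Pr.real {ω | U ω = a ∧ V ω = b ∧ W ω = c})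
      + negMulLog (Pr.real {ω | W ω = c})
      = ∑ b, negMulLog (Pr.real {ω | V ω = b ∧ W ω = c})
        + ∑ a, negMulLog (Pr.real {ω | U ω = a ∧ W ω = c}) := fun c => by
    have := sum_negMulLog_add_negMulLog_sum_eq_of_mul_eq
        (fun b a => Pr.real {ω | U ω = a ∧ V ω = b ∧ W ω = c}) (fun _ _ => measureReal_nonneg)
        fun b a hne => by
          simpa only [sum_measureReal_fiber_fst hU hV hW, sum_measureReal_fiber_snd hV hW,
            sum_measureReal_fiber_mid hU hV hW, mul_comm (Pr.real {ω | V ω = b ∧ W ω = c})]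
            using hfac a b c hne
    simpa only [sum_measureReal_fiber_fst hU hV hW, sum_measureReal_fiber_snd hV hW,
      sum_measureReal_fiber_mid hU hV hW] using this
  have hsum := sum_congr rfl fun c (_ : c ∈ univ) => hslice c
  simp only [sum_add_distrib] at hsum
  rw [condHent, condHent, Hent_prod_prod_eq, Hent_prod_eq, Hent_prod_eq, Hent_eq_sum]
  linarith

end Measurable

lemma measurable_tupleRV {Ω E : Type*} [MeasurableSpace Ω] {V : E → Type*}
    [∀ t, MeasurableSpace (V t)] {Z : ∀ t, Ω → V t} (hZ : ∀ t, Measurable (Z t)) (A : Finset E) :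
    Measurable (tupleRV Z A) :=
  measurable_pi_lambda _ fun t => hZ t

section Tuple

variable {Ω : Type*} [MeasurableSpace Ω] {Pr : Measure Ω} {α VW E : Type*} [DecidableEq E]
  [Fintype α] [Fintype VW] {V : E → Type*} [∀ t, Fintype (V t)] {U : Ω → α} {W : Ω → VW}
  {Z : ∀ t, Ω → V t}

lemma condHent_tupleRV_empty :
    condHent Pr U (fun ω => (tupleRV Z ∅ ω, W ω)) = condHent Pr U W :=
  condHent_congr Prod.snd (fun w => (fun t => (notMem_empty t.1 t.2).elim, w)) (fun _ => rfl)
    fun _ => Prod.ext (funext fun t => (notMem_empty t.1 t.2).elim) rfl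

lemma condHent_tupleRV_insert (s : E) (A : Finset E) :
    condHent Pr U (fun ω => (tupleRV Z (insert s A) ω, W ω))
      = condHent Pr U (fun ω => (Z s ω, tupleRV Z A ω, W ω)) := by
  refine condHent_congr
    (fun q => (q.1 ⟨s, mem_insert_self s A⟩, fun t => q.1 ⟨t, mem_insert_of_mem t.2⟩, q.2))
    (fun q => (fun t => if h : t.1 = s then cast (congrArg V h.symm) q.1
      else q.2.1 ⟨t, (mem_insert.1 t.2).resolve_left h⟩, q.2.2))
    (fun _ => rfl) fun ω => Prod.ext (funext fun ⟨t, ht⟩ => ?_) rfl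
  by_cases h : t = s
  · subst h
    simp [tupleRV]
  · simp [h, tupleRV]

variable [IsFiniteMeasure Pr] [MeasurableSpace α] [MeasurableSingletonClass α]
  [MeasurableSpace VW] [MeasurableSingletonClass VW] [∀ t, MeasurableSpace (V t)]
  [∀ t, MeasurableSingletonClass (V t)]

lemma condHent_tupleRV_anti (hU : Measurable U) (hW : Measurable W) (hZ : ∀ t, Measurable (Z t))
    {A B : Finset E} (hAB : A ⊆ B) :
    condHent Pr U (fun ω => (tupleRV Z B ω, W ω))
      ≤ condHent Pr U (fun ω => (tupleRV Z A ω, W ω)) :=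
  condHent_le_condHent_of_comp hU ((measurable_tupleRV hZ B).prodMk hW)
    ((measurable_tupleRV hZ A).prodMk hW) (fun q => (fun t => q.1 ⟨t, hAB t.2⟩, q.2)) fun _ => rfl

end Tuple

lemma sum_ite_prod_eq_prod {E : Type*} [Fintype E] [DecidableEq E] {V : E → Type*}
    [∀ t, Fintype (V t)] [∀ t, DecidableEq (V t)] (G : ∀ t, V t → ℝ)
    (hG : ∀ t, ∑ u, G t u = 1) (D : Finset E) (z : ∀ t, V t) :
    ∑ y : ∀ t, V t, (if ∀ t ∈ D, y t = z t then ∏ t, G t (y t) else 0)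
      = ∏ t ∈ D, G t (z t) := by
  have hfactor : ∀ y : ∀ t, V t, (if ∀ t ∈ D, y t = z t then ∏ t, G t (y t) else 0)
      = ∏ t, if t ∈ D then (if y t = z t then G t (y t) else 0) else G t (y t) := by
    intro y
    split_ifs with hy
    · refine prod_congr rfl fun t _ => ?_
      split_ifs with ht <;> simp_all
    · push Not at hy
      obtain ⟨t, ht, hyt⟩ := hy
      exact (prod_eq_zero (mem_univ t) (by simp [ht, hyt])).symm
  have hsum : ∀ t, (∑ u, if t ∈ D then (if u = z t then G t u else 0) else G t u)
      = if t ∈ D then G t (z t) else 1 := by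
    intro t
    split_ifs
    · simp
    · exact hG t
  rw [sum_congr rfl fun y _ => hfactor y,
    ← Fintype.prod_sum (fun t u => if t ∈ D then (if u = z t then G t u else 0) else G t u)]
  simp only [hsum, prod_ite_mem, univ_inter]

namespace FamilyWithWCondIndepGiven

variable {Ω : Type*} [MeasurableSpace Ω] {Pr : Measure Ω} [IsFiniteMeasure Pr]
  {S VW E : Type*} [MeasurableSpace S] [MeasurableSingletonClass S]
  [MeasurableSpace VW] [MeasurableSingletonClass VW] [Fintype E]
  {V : E → Type*} [∀ t, Fintype (V t)] [∀ t, MeasurableSpace (V t)]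
  [∀ t, MeasurableSingletonClass (V t)] {X : Ω → S} {W : Ω → VW} {Z : ∀ t, Ω → V t}

lemma measureReal_div_eq_mul_prod (h : FamilyWithWCondIndepGiven Pr X W Z)
    (hX : Measurable X) (hW : Measurable W) (hZ : ∀ t, Measurable (Z t)) {x : S}
    (hx : Pr {ω | X ω = x} ≠ 0) (w : VW) (z : ∀ t, V t) (D : Finset E) :
    Pr.real {ω | W ω = w ∧ (∀ t ∈ D, Z t ω = z t) ∧ X ω = x} / Pr.real {ω | X ω = x}
      = Pr.real {ω | W ω = w ∧ X ω = x} / Pr.real {ω | X ω = x}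
        * ∏ t ∈ D, (Pr.real {ω | Z t ω = z t ∧ X ω = x} / Pr.real {ω | X ω = x}) := by
  classical
  set N := Pr.real {ω | X ω = x}
  have hN : N ≠ 0 := (measureReal_ne_zero_iff).2 hx
  have hG : ∀ t, ∑ u, Pr.real {ω | Z t ω = u ∧ X ω = x} / N = 1 := fun t => by
    rw [← sum_div, sum_measureReal_fiber_and (P := fun ω => X ω = x) (hZ t)
      (hX (measurableSet_singleton x)), div_self hN]
  have hterm : ∀ y : ∀ t, V t,
      Pr.real {ω | (fun t => Z t ω) = y ∧ W ω = w ∧ (∀ t ∈ D, Z t ω = z t) ∧ X ω = x} / N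
        = Pr.real {ω | W ω = w ∧ X ω = x} / N
          * if ∀ t ∈ D, y t = z t then ∏ t, Pr.real {ω | Z t ω = y t ∧ X ω = x} / N else 0 := by
    intro y
    split_ifs with hy
    · have hfull : Pr.real {ω | W ω = w ∧ (∀ t, Z t ω = y t) ∧ X ω = x} / N
          = Pr.real {ω | W ω = w ∧ X ω = x} / N
            * ∏ t, Pr.real {ω | Z t ω = y t ∧ X ω = x} / N := h x hx w y
      rw [← hfull]
      congr 2
      ext ω
      simp only [Set.mem_ofPred_eq, funext_iff]
      exact ⟨fun ⟨hZy, hw, _, hx⟩ => ⟨hw, hZy, hx⟩,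
        fun ⟨hw, hZy, hx⟩ => ⟨hZy, hw, fun t ht => (hZy t).trans (hy t ht), hx⟩⟩
    · convert (zero_div N).trans (mul_zero _).symm
      convert measureReal_empty (μ := Pr)
      ext ω
      simp only [Set.mem_ofPred_eq, Set.mem_empty_iff_false, iff_false, not_and]
      rintro rfl - hz -
      exact hy hz
  rw [← sum_measureReal_fiber_and (measurable_pi_lambda _ hZ) (by measurability), sum_div]
  simp only [hterm, ← mul_sum]
  rw [sum_ite_prod_eq_prod (fun t u => Pr.real {ω | Z t ω = u ∧ X ω = x} / N) hG]

variable [Fintype S] [Fintype VW] [DecidableEq E]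

lemma condHent_prod_tupleRV_eq (h : FamilyWithWCondIndepGiven Pr X W Z) (hX : Measurable X)
    (hW : Measurable W) (hZ : ∀ t, Measurable (Z t)) {s : E} {A : Finset E} (hs : s ∉ A) :
    condHent Pr (Z s) (fun ω => (X ω, tupleRV Z A ω, W ω)) = condHent Pr (Z s) X := by
  rw [condHent_congr (K := fun ω => (X ω, tupleRV Z A ω, W ω))
    (L := fun ω => ((tupleRV Z A ω, W ω), X ω)) Prod.swap Prod.swap (fun _ => rfl) fun _ => rfl]
  refine condHent_prod_eq_of_condIndep (hZ s) ((measurable_tupleRV hZ A).prodMk hW)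
    hX fun a c x hne => ?_
  -- Only values realised at some `ω₀` matter, so the full tuple can be taken to be `Z · ω₀`.
  obtain ⟨ω₀, rfl, rfl, rfl⟩ := nonempty_of_measureReal_ne_zero hne
  have hx : Pr {ω | X ω = X ω₀} ≠ 0 := fun h0 =>
    hne ((measureReal_eq_zero_iff).2 (measure_mono_null (fun ω hω => hω.2.2) h0))
  have key := h.measureReal_div_eq_mul_prod hX hW hZ hx (W ω₀) (fun t => Z t ω₀)
  have hins := key (insert s A)
  have hA := key A
  rw [prod_insert hs] at hins
  have E1 : {ω | Z s ω = Z s ω₀ ∧ (tupleRV Z A ω, W ω) = (tupleRV Z A ω₀, W ω₀) ∧ X ω = X ω₀}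
      = {ω | W ω = W ω₀ ∧ (∀ t ∈ insert s A, Z t ω = Z t ω₀) ∧ X ω = X ω₀} := by
    ext ω
    simp only [Prod.mk.injEq, funext_iff, tupleRV, Subtype.forall, Set.mem_ofPred_eq, mem_insert,
      forall_eq_or_imp]
    tauto
  have E2 : {ω | (tupleRV Z A ω, W ω) = (tupleRV Z A ω₀, W ω₀) ∧ X ω = X ω₀}
      = {ω | W ω = W ω₀ ∧ (∀ t ∈ A, Z t ω = Z t ω₀) ∧ X ω = X ω₀} := by
    ext ω
    simp only [Prod.mk.injEq, funext_iff, tupleRV, Subtype.forall, Set.mem_ofPred_eq]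
    tauto
  rw [E1, E2]
  have hN : Pr.real {ω | X ω = X ω₀} ≠ 0 := (measureReal_ne_zero_iff).2 hx
  rw [div_eq_iff hN] at hins hA
  rw [hins, hA]
  field_simp

lemma condHent_sub_condHent_insert (h : FamilyWithWCondIndepGiven Pr X W Z)
    (hX : Measurable X) (hW : Measurable W) (hZ : ∀ t, Measurable (Z t)) {s : E} {A : Finset E}
    (hs : s ∉ A) :
    condHent Pr X (fun ω => (tupleRV Z A ω, W ω))
        - condHent Pr X (fun ω => (tupleRV Z (insert s A) ω, W ω))
      = condHent Pr (Z s) (fun ω => (tupleRV Z A ω, W ω)) - condHent Pr (Z s) X := by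
  rw [condHent_tupleRV_insert, condHent_sub_condHent_prod_comm, h.condHent_prod_tupleRV_eq hX hW hZ hs]

end FamilyWithWCondIndepGiven

/-- If `W` together with the family `(Z s)_{s ∈ E}` is conditionally independent given `X`,
then the set function `A ↦ I(X; Z_A | W)` is submodular and nondecreasing, with
`I(X; Z_∅ | W) = 0`. -/
theorem condMutualInfo_tuple_submodular_monotone
    {Ω : Type*} [MeasurableSpace Ω] (Pr : Measure Ω) [IsProbabilityMeasure Pr]
    {S : Type*} [Fintype S] [MeasurableSpace S] [MeasurableSingletonClass S]
    {VW : Type*} [Fintype VW] [MeasurableSpace VW] [MeasurableSingletonClass VW]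
    {E : Type*} [Fintype E] [DecidableEq E]
    {V : E → Type*} [∀ s, Fintype (V s)]
    [∀ s, MeasurableSpace (V s)] [∀ s, MeasurableSingletonClass (V s)]
    (X : Ω → S) (hX : Measurable X)
    (W : Ω → VW) (hW : Measurable W)
    (Z : (s : E) → Ω → V s) (hZ : ∀ s, Measurable (Z s))
    (hindep : FamilyWithWCondIndepGiven Pr X W Z) :
    Submodular (fun A => condMutualInfo Pr X (tupleRV Z A) W)
    ∧ (∀ A B : Finset E, A ⊆ B →
        condMutualInfo Pr X (tupleRV Z A) W ≤ condMutualInfo Pr X (tupleRV Z B) W)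
    ∧ condMutualInfo Pr X (tupleRV Z (∅ : Finset E)) W = 0 := by
  simp only [Submodular, condMutualInfo_eq_condHent_sub_condHent]
  refine ⟨fun A B hAB s hsB => ?_, fun A B hAB => ?_, ?_⟩
  · have hgainA := hindep.condHent_sub_condHent_insert hX hW hZ fun hsA => hsB (hAB hsA)
    have hgainB := hindep.condHent_sub_condHent_insert hX hW hZ hsB
    linarith [condHent_tupleRV_anti (Pr := Pr) (hZ s) hW hZ hAB]
  · linarith [condHent_tupleRV_anti (Pr := Pr) hX hW hZ hAB]
  · rw [condHent_tupleRV_empty, sub_self]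
end
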